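/- Let X and U be finite nonempty sets, K a positive integer, and L̄_P, L̄_Q ≥ 0. Let π̄ = (π̄_k)_{k∈[K]} be decision rules π̄_k : X × P(X)^K → P(U) with |π̄_k(x,μ̄₁) − π̄_k(x,μ̄₂)|₁ ≤ L̄_Q·|μ̄₁ − μ̄₂|₁ for all arguments. Let P̄_k : X × U × P(X)^K × P(U)^K → P(X) satisfy |P̄_k(x,u,μ̄₁,ν̄₁) − P̄_k(x,u,μ̄₂,ν̄₂)|₁ ≤ L̄_P·(|μ̄₁ − μ̄₂|₁ + |ν̄₁ − ν̄₂|₁). Define ν̄^MF(μ̄,π̄)(u,k) = Σ_x π̄_k(x,μ̄)(u)·μ̄(x,k) and P̄^MF(μ̄,π̄) ∈ P(X)^K by P̄^MF(μ̄,π̄)(x',k) = Σ_{x,u} μ̄(x,k)·π̄_k(x,μ̄)(u)·P̄_k(x,u,μ̄,ν̄^MF(μ̄,π̄))(x'). Then for all μ̄, μ̄' ∈ P(X)^K, |P̄^MF(μ̄,π̄) − P̄^MF(μ̄',π̄)|₁ ≤ S̄_P·|μ̄ − μ̄'|₁, where S̄_P = (1+K·L̄_Q) + K·L̄_P·(2+K·L̄_Q).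 -/

import Mathlib

/-!
Transport along a stochastic kernel is nonexpansive in L1 up to the change of kernel:
`|w·p − w'·q|₁ ≤ |w − w'|₁ + max_i |p_i − q_i|₁` for probability weights and kernels.
Applied to the action marginal this bounds `ν^MF` by `(1 + K L_Q)·|μ − μ'|₁`; applied to the
state–action weights `μ(x,k) π_k(x,μ)(u)` and the kernels `P_k`, whose change costs at most
`L_P (|μ − μ'|₁ + |ν − ν'|₁)`, it gives the claimed constant after summing over the `K` classes.
-/

open Finset

/-- A probability distribution on a finite type, represented as a nonnegative
function summing to one. -/
def IsProb {A : Type*} [Fintype A] (μ : A → ℝ) : Prop :=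
  (∀ a, 0 ≤ μ a) ∧ ∑ a, μ a = 1

/-- An element of `P(A)^K`: for each class `k`, the slice `μ (·, k)` is a
probability distribution on `A`. -/
def IsProbK {A : Type*} [Fintype A] {K : ℕ} (μ : A × Fin K → ℝ) : Prop :=
  ∀ k, IsProb (fun a => μ (a, k))

/-- The L1 distance between two real-valued functions on a finite type. -/
noncomputable def l1 {A : Type*} [Fintype A] (μ ν : A → ℝ) : ℝ :=
  ∑ a, |μ a - ν a|

lemma l1_prod_eq_sum {A B : Type*} [Fintype A] [Fintype B] (f g : A × B → ℝ) :
    l1 f g = ∑ b, l1 (fun a => f (a, b)) (fun a => g (a, b)) :=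
  Fintype.sum_prod_type_right _

lemma l1_le_of_forall_slice_le {A A' B : Type*} [Fintype A] [Fintype A'] [Fintype B]
    {f g : A × B → ℝ} {μ μ' : A' × B → ℝ} {c : ℝ}
    (h : ∀ b, l1 (fun a => f (a, b)) (fun a => g (a, b))
      ≤ l1 (fun a => μ (a, b)) (fun a => μ' (a, b)) + c) :
    l1 f g ≤ l1 μ μ' + Fintype.card B * c := by
  rw [l1_prod_eq_sum, l1_prod_eq_sum μ, ← nsmul_eq_mul, ← card_univ, ← sum_const,
    ← sum_add_distrib]
  exact sum_le_sum fun b _ => h b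

section Kernel

variable {I Y : Type*} [Fintype I] [Fintype Y]

lemma l1_marginal_le (f g : I × Y → ℝ) :
    l1 (fun y => ∑ i, f (i, y)) (fun y => ∑ i, g (i, y)) ≤ l1 f g := by
  rw [l1_prod_eq_sum, l1]
  exact sum_le_sum fun y _ => by
    simpa only [l1, ← sum_sub_distrib] using abs_sum_le_sum_abs _ _

lemma IsProb.joint {w : I → ℝ} {p : I → Y → ℝ} (hw : IsProb w) (hp : ∀ i, IsProb (p i)) :
    IsProb (fun z : I × Y => w z.1 * p z.1 z.2) := by
  refine ⟨fun z => mul_nonneg (hw.1 _) ((hp _).1 _), ?_⟩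
  simp only [Fintype.sum_prod_type, ← mul_sum, (hp _).2, mul_one, hw.2]

lemma IsProb.mixture {w : I → ℝ} {p : I → Y → ℝ} (hw : IsProb w) (hp : ∀ i, IsProb (p i)) :
    IsProb (fun y => ∑ i, w i * p i y) := by
  refine ⟨fun y => sum_nonneg fun i _ => mul_nonneg (hw.1 i) ((hp i).1 y), ?_⟩
  rw [sum_comm]
  simp only [← mul_sum, (hp _).2, mul_one, hw.2]

lemma l1_joint_le_add {w w' : I → ℝ} {p q : I → Y → ℝ} {c : ℝ}
    (hp : ∀ i, IsProb (p i)) (hw' : IsProb w') (hpq : ∀ i, l1 (p i) (q i) ≤ c) :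
    l1 (fun z : I × Y => w z.1 * p z.1 z.2) (fun z => w' z.1 * q z.1 z.2) ≤ l1 w w' + c := by
  have hrow : ∀ i, ∑ y, |w i * p i y - w' i * q i y| ≤ |w i - w' i| + w' i * c := fun i =>
    calc ∑ y, |w i * p i y - w' i * q i y|
        ≤ ∑ y, (|w i - w' i| * p i y + w' i * |p i y - q i y|) := by
          refine sum_le_sum fun y _ => ?_
          rw [show w i * p i y - w' i * q i y = (w i - w' i) * p i y + w' i * (p i y - q i y)
            by ring]
          refine (abs_add_le _ _).trans_eq ?_
          rw [abs_mul, abs_mul, abs_of_nonneg ((hp i).1 y), abs_of_nonneg (hw'.1 i)]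
      _ = |w i - w' i| + w' i * l1 (p i) (q i) := by
          rw [sum_add_distrib, ← mul_sum, ← mul_sum, (hp i).2, mul_one, l1]
      _ ≤ |w i - w' i| + w' i * c := by gcongr; exacts [hw'.1 i, hpq i]
  calc l1 (fun z : I × Y => w z.1 * p z.1 z.2) (fun z => w' z.1 * q z.1 z.2)
      ≤ ∑ i, (|w i - w' i| + w' i * c) := by
        rw [l1, Fintype.sum_prod_type]
        exact sum_le_sum fun i _ => hrow i
    _ = l1 w w' + c := by rw [sum_add_distrib, ← sum_mul, hw'.2, one_mul, l1]

lemma l1_mixture_le_add {w w' : I → ℝ} {p q : I → Y → ℝ} {c : ℝ}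
    (hp : ∀ i, IsProb (p i)) (hw' : IsProb w') (hpq : ∀ i, l1 (p i) (q i) ≤ c) :
    l1 (fun y => ∑ i, w i * p i y) (fun y => ∑ i, w' i * q i y) ≤ l1 w w' + c :=
  (l1_marginal_le (fun z => w z.1 * p z.1 z.2) (fun z => w' z.1 * q z.1 z.2)).trans
    (l1_joint_le_add hp hw' hpq)

end Kernel

theorem stmt14_general
    {X U : Type*} [Fintype X] [Fintype U]
    (K : ℕ)
    (LP LQ : ℝ) (hLP : 0 ≤ LP)
    (pi : Fin K → X → (X × Fin K → ℝ) → U → ℝ)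
    (hpiProb : ∀ k x μ, IsProbK μ → IsProb (pi k x μ))
    (hpiLip : ∀ k x μ₁ μ₂, IsProbK μ₁ → IsProbK μ₂ →
      l1 (pi k x μ₁) (pi k x μ₂) ≤ LQ * l1 μ₁ μ₂)
    (Pk : Fin K → X → U → (X × Fin K → ℝ) → (U × Fin K → ℝ) → X → ℝ)
    (hPkProb : ∀ k x u μ ν, IsProbK μ → IsProbK ν → IsProb (Pk k x u μ ν))
    (hPkLip : ∀ k x u μ₁ ν₁ μ₂ ν₂, IsProbK μ₁ → IsProbK ν₁ → IsProbK μ₂ → IsProbK ν₂ →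
      l1 (Pk k x u μ₁ ν₁) (Pk k x u μ₂ ν₂) ≤ LP * (l1 μ₁ μ₂ + l1 ν₁ ν₂))
    (nuMF : (X × Fin K → ℝ) → U × Fin K → ℝ)
    (hnuMF : ∀ μ u k, nuMF μ (u, k) = ∑ x, pi k x μ u * μ (x, k))
    (PMFmu : (X × Fin K → ℝ) → X × Fin K → ℝ)
    (hPMFmu : ∀ μ x' k, PMFmu μ (x', k) =
      ∑ x, ∑ u, μ (x, k) * pi k x μ u * Pk k x u μ (nuMF μ) x')
    (μ μ' : X × Fin K → ℝ) (hμ : IsProbK μ) (hμ' : IsProbK μ') :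
    l1 (PMFmu μ) (PMFmu μ')
      ≤ ((1 + (K : ℝ) * LQ) + (K : ℝ) * LP * (2 + (K : ℝ) * LQ)) * l1 μ μ' := by
  set L := l1 μ μ'
  have hνProb : ∀ σ, IsProbK σ → IsProbK (nuMF σ) := fun σ hσ k => by
    simpa only [hnuMF, mul_comm (pi _ _ _ _)] using (hσ k).mixture fun x => hpiProb k x σ hσ
  have hνLip : l1 (nuMF μ) (nuMF μ') ≤ (1 + K * LQ) * L := by
    refine (l1_le_of_forall_slice_le (μ := μ) (μ' := μ') (c := LQ * L) fun k => ?_).trans_eq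
      (by rw [Fintype.card_fin]; ring)
    simp only [hnuMF, mul_comm (pi _ _ _ _)]
    exact l1_mixture_le_add (fun x => hpiProb k x μ hμ) (hμ' k) fun x => hpiLip k x μ μ' hμ hμ'
  have hPkLip' : ∀ k x u, l1 (Pk k x u μ (nuMF μ)) (Pk k x u μ' (nuMF μ'))
      ≤ LP * (2 + K * LQ) * L := fun k x u => by
    refine (hPkLip k x u _ _ _ _ hμ (hνProb μ hμ) hμ' (hνProb μ' hμ')).trans ?_
    nlinarith [mul_le_mul_of_nonneg_left hνLip hLP]
  refine (l1_le_of_forall_slice_le (μ := μ) (μ' := μ') (c := LQ * L + LP * (2 + K * LQ) * L)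
    fun k => ?_).trans_eq (by rw [Fintype.card_fin]; ring)
  have hweights := l1_joint_le_add (w := fun x => μ (x, k)) (fun x => hpiProb k x μ hμ)
    (hμ' k) fun x => hpiLip k x μ μ' hμ hμ'
  have hmix := l1_mixture_le_add (w := fun z : X × U => μ (z.1, k) * pi k z.1 μ z.2)
    (p := fun z => Pk k z.1 z.2 μ (nuMF μ)) (q := fun z => Pk k z.1 z.2 μ' (nuMF μ'))
    (fun z => hPkProb k z.1 z.2 _ _ hμ (hνProb μ hμ))
    ((hμ' k).joint fun x => hpiProb k x μ' hμ') fun z => hPkLip' k z.1 z.2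
  simp only [Fintype.sum_prod_type] at hmix
  simp only [hPMFmu]
  exact hmix.trans (by linarith)

theorem stmt14
    {X U : Type*} [Fintype X] [Fintype U] [Nonempty X] [Nonempty U]
    (K : ℕ) (hK : 0 < K)
    (LP LQ : ℝ) (hLP : 0 ≤ LP) (hLQ : 0 ≤ LQ)
    (pi : Fin K → X → (X × Fin K → ℝ) → U → ℝ)
    (hpiProb : ∀ k x μ, IsProbK μ → IsProb (pi k x μ))
    (hpiLip : ∀ k x μ₁ μ₂, IsProbK μ₁ → IsProbK μ₂ →
      l1 (pi k x μ₁) (pi k x μ₂) ≤ LQ * l1 μ₁ μ₂)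
    (Pk : Fin K → X → U → (X × Fin K → ℝ) → (U × Fin K → ℝ) → X → ℝ)
    (hPkProb : ∀ k x u μ ν, IsProbK μ → IsProbK ν → IsProb (Pk k x u μ ν))
    (hPkLip : ∀ k x u μ₁ ν₁ μ₂ ν₂, IsProbK μ₁ → IsProbK ν₁ → IsProbK μ₂ → IsProbK ν₂ →
      l1 (Pk k x u μ₁ ν₁) (Pk k x u μ₂ ν₂) ≤ LP * (l1 μ₁ μ₂ + l1 ν₁ ν₂))
    (nuMF : (X × Fin K → ℝ) → U × Fin K → ℝ)
    (hnuMF : ∀ μ u k, nuMF μ (u, k) = ∑ x, pi k x μ u * μ (x, k))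
    (PMFmu : (X × Fin K → ℝ) → X × Fin K → ℝ)
    (hPMFmu : ∀ μ x' k, PMFmu μ (x', k) =
      ∑ x, ∑ u, μ (x, k) * pi k x μ u * Pk k x u μ (nuMF μ) x')
    (μ μ' : X × Fin K → ℝ) (hμ : IsProbK μ) (hμ' : IsProbK μ') :
    l1 (PMFmu μ) (PMFmu μ')
      ≤ ((1 + (K : ℝ) * LQ) + (K : ℝ) * LP * (2 + (K : ℝ) * LQ)) * l1 μ μ' :=
  stmt14_general K LP LQ hLP pi hpiProb hpiLip Pk hPkProb hPkLip nuMF hnuMF PMFmu hPMFmu μ μ' hμ hμ'
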